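/- Let R be a commutative ring, I a finitely generated faithful ideal generated by x_1,…,x_n, and set cTr(R/I) = R^n / K where K is the cyclic submodule generated by (x_1,…,x_n). Then cTr(R/I) is a finitely presented R-module of projective dimension at most 1, and an R-module M satisfies Ext^1_R(cTr(R/I), M) = 0 if and only if M = IM. -/

import Mathlib

/-!
Since `I` is faithful, `r ↦ r • x` is injective, so `0 → R → Rⁿ → cTr(R/I) → 0` is a free
resolution and `Ext¹(cTr(R/I), M)` is the cokernel of the restriction
`Hom(Rⁿ, M) → Hom(R·x, M) ≅ M`, `ψ ↦ ψ x`. Its image is `I • M`, since `ψ x = ∑ xᵢ • ψ eᵢ`.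

With `Ext¹` read as splitting of extensions, "every map `φ : K → M` extends to `F`" is equivalent
to `Ext¹(F ⧸ K, M) = 0` for projective `F`: a lift `F → E` of `F → F ⧸ K`, corrected on `K` by an
extension of its restriction, descends to a section; conversely the pushout of
`0 → K → F → F ⧸ K → 0` along `φ` splits, and a retraction of it restricts to an extension of `φ`.
-/

universe u

/-- `ExtVanishes R T N` encodes `Ext¹_R(T, N) = 0`: every short exact sequence
`0 → N → E → T → 0` splits, i.e. every surjection onto `T` with kernel
isomorphic to `N` admits a section. -/
def ExtVanishes (R : Type u) [Ring R] (T : Type u) [AddCommGroup T]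
    [Module R T] (N : Type u) [AddCommGroup N] [Module R N] : Prop :=
  ∀ (E : Type u) [AddCommGroup E] [Module R E] (π : E →ₗ[R] T),
    Function.Surjective π → Nonempty (↥(LinearMap.ker π) ≃ₗ[R] N) →
    ∃ σ : T →ₗ[R] E, π ∘ₗ σ = LinearMap.id

namespace Submodule

variable {R : Type u} [Ring R] {F M : Type u} [AddCommGroup F] [Module R F]
  [AddCommGroup M] [Module R M] {K : Submodule R F}

theorem extVanishes_quotient_of_forall_extend [Module.Projective R F]
    (hext : ∀ φ : K →ₗ[R] M, ∃ ψ : F →ₗ[R] M, ψ ∘ₗ K.subtype = φ) :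
    ExtVanishes R (F ⧸ K) M := by
  intro E _ _ π hπ ⟨e⟩
  obtain ⟨f, hf⟩ := Module.projective_lifting_property π K.mkQ hπ
  have hfK : ∀ k : K, f k ∈ LinearMap.ker π := fun k => by
    simp [← LinearMap.comp_apply, hf]
  obtain ⟨ψ, hψ⟩ := hext (e ∘ₗ (f ∘ₗ K.subtype).codRestrict _ hfK)
  -- `f` minus the extension `ψ` of `f|K` vanishes on `K`, so it descends to a section
  let g := f - (LinearMap.ker π).subtype ∘ₗ e.symm ∘ₗ ψ
  have hg : K ≤ LinearMap.ker g := fun k hk => by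
    have hψk : ψ k = e ⟨f k, hfK ⟨k, hk⟩⟩ := congr($hψ ⟨k, hk⟩)
    simp [g, hψk]
  refine ⟨K.liftQ g hg, K.linearMap_qext ?_⟩
  ext v
  simp [g, ← LinearMap.comp_apply π f, hf]

theorem exists_extend_of_extVanishes_quotient (h : ExtVanishes R (F ⧸ K) M)
    (φ : K →ₗ[R] M) : ∃ ψ : F →ₗ[R] M, ψ ∘ₗ K.subtype = φ := by
  -- the pushout of `0 → K → F → F ⧸ K → 0` along `φ`
  let N : Submodule R (F × M) := LinearMap.range (K.subtype.prod (-φ))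
  let π : ((F × M) ⧸ N) →ₗ[R] F ⧸ K :=
    N.liftQ (K.mkQ ∘ₗ LinearMap.fst R F M) (by rintro _ ⟨k, rfl⟩; simp)
  let ι : M →ₗ[R] (F × M) ⧸ N := N.mkQ ∘ₗ LinearMap.inr R F M
  have hιφ : ∀ k : K, N.mkQ (k, 0) = ι (φ k) := fun k =>
    (Submodule.Quotient.eq N).mpr ⟨k, by simp⟩
  have hι : Function.Injective ι := by
    rw [injective_iff_map_eq_zero]
    intro m hm
    obtain ⟨k, hk⟩ := (Submodule.Quotient.mk_eq_zero N).mp hm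
    obtain rfl : k = 0 := Subtype.ext congr($hk.1)
    simpa using congr($hk.2).symm
  have hexact : Function.Exact ι π := by
    intro y
    obtain ⟨⟨v, m⟩, rfl⟩ := N.mkQ_surjective y
    constructor
    · intro hv
      have hvK : v ∈ K := (Submodule.Quotient.mk_eq_zero K).mp hv
      refine ⟨m + φ ⟨v, hvK⟩, ?_⟩
      rw [map_add, ← hιφ]
      change N.mkQ (0, m) + N.mkQ (v, 0) = N.mkQ (v, m)
      rw [← map_add, Prod.mk_add_mk, zero_add, add_zero]
    · rintro ⟨m', hm'⟩
      simp [← hm', π, ι]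
  have hπ : Function.Surjective π := fun c => by
    obtain ⟨v, rfl⟩ := K.mkQ_surjective c
    exact ⟨N.mkQ (v, 0), rfl⟩
  have hker : Nonempty (LinearMap.ker π ≃ₗ[R] M) :=
    ⟨(LinearEquiv.ofEq _ _ hexact.linearMap_ker_eq).trans (LinearEquiv.ofInjective ι hι).symm⟩
  obtain ⟨σ, hσ⟩ := h _ π hπ hker
  have hsplit : (∃ σ, π ∘ₗ σ = LinearMap.id) → ∃ ρ, ρ ∘ₗ ι = LinearMap.id :=
    ((hexact.split_tfae hι hπ).out 0 1).mp
  obtain ⟨ρ, hρ⟩ := hsplit ⟨σ, hσ⟩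
  refine ⟨ρ ∘ₗ N.mkQ ∘ₗ LinearMap.inl R F M, ?_⟩
  ext k
  simpa [hιφ] using congr($hρ (φ k))

end Submodule

section CommRing

variable {R : Type*} [CommRing R]

theorem Ideal.span_range_smul_top_eq_range_applyₗ {ι M : Type*} [Fintype ι] [AddCommGroup M]
    [Module R M] (x : ι → R) :
    Ideal.span (Set.range x) • (⊤ : Submodule R M) =
      LinearMap.range (LinearMap.applyₗ (R := R) (M₂ := M) x) := by
  classical
  apply le_antisymm
  · refine Submodule.smul_le.mpr fun r hr m _ => ?_
    have hspan : Ideal.span (Set.range x) ≤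
        (LinearMap.range (LinearMap.applyₗ (R := R) (M₂ := M) x)).comap
          (LinearMap.toSpanSingleton R M m) :=
      Ideal.span_le.mpr <| Set.range_subset_iff.mpr fun i =>
        ⟨LinearMap.toSpanSingleton R M m ∘ₗ LinearMap.proj i, by simp⟩
    exact hspan hr
  · rintro _ ⟨ψ, rfl⟩
    rw [LinearMap.applyₗ_apply_apply, LinearMap.pi_apply_eq_sum_univ]
    exact Submodule.sum_mem _ fun i _ =>
      Submodule.smul_mem_smul (Ideal.subset_span ⟨i, rfl⟩) Submodule.mem_top

theorem LinearMap.toSpanSingleton_injective_of_faithful {ι : Type*} (x : ι → R)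
    (hx : ∀ r : R, (∀ y ∈ Ideal.span (Set.range x), r * y = 0) → r = 0) :
    Function.Injective (LinearMap.toSpanSingleton R (ι → R) x) := by
  refine (injective_iff_map_eq_zero _).mpr fun r hr => hx r fun y hy => ?_
  have hspan : Ideal.span (Set.range x) ≤ LinearMap.ker (LinearMap.mulLeft R r) :=
    Ideal.span_le.mpr <| Set.range_subset_iff.mpr fun i => by simpa using congr_fun hr i
  exact hspan hy

theorem forall_extend_range_toSpanSingleton_iff {F M : Type*} [AddCommGroup F] [Module R F]
    [AddCommGroup M] [Module R M] {v : F}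
    (hv : Function.Injective (LinearMap.toSpanSingleton R F v)) :
    (∀ φ : LinearMap.range (LinearMap.toSpanSingleton R F v) →ₗ[R] M,
        ∃ ψ : F →ₗ[R] M, ψ ∘ₗ Submodule.subtype _ = φ) ↔
      Function.Surjective (LinearMap.applyₗ (R := R) (M₂ := M) v) := by
  have hv_mem : v ∈ LinearMap.range (LinearMap.toSpanSingleton R F v) := ⟨1, one_smul R v⟩
  constructor
  · intro hext m
    obtain ⟨ψ, hψ⟩ :=
      hext (LinearMap.toSpanSingleton R M m ∘ₗ (LinearEquiv.ofInjective _ hv).symm.toLinearMap)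
    refine ⟨ψ, ?_⟩
    have hv_one : (LinearEquiv.ofInjective _ hv).symm ⟨v, hv_mem⟩ = 1 :=
      (LinearEquiv.ofInjective _ hv).symm_apply_eq.mpr (Subtype.ext (one_smul R v).symm)
    have hψv := congr($hψ ⟨v, hv_mem⟩)
    rw [LinearMap.comp_apply, LinearMap.comp_apply, LinearEquiv.coe_coe, hv_one,
      LinearMap.toSpanSingleton_apply, one_smul] at hψv
    exact hψv
  · intro hsurj φ
    obtain ⟨ψ, hψ⟩ := hsurj (φ ⟨v, hv_mem⟩)
    refine ⟨ψ, LinearMap.ext fun ⟨_, r, hr⟩ => ?_⟩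
    subst hr
    calc ψ (r • v) = r • φ ⟨v, hv_mem⟩ := by rw [map_smul, ← hψ]; rfl
      _ = φ (r • ⟨v, hv_mem⟩) := (map_smul φ r _).symm

end CommRing

/-- Let `R` be a commutative ring, `I` a finitely generated
faithful ideal generated by `x 0, …, x (n-1)`, and let
`cTr(R/I) = R^n / R·(x 0, …, x (n-1))`.  Then `cTr(R/I)` is a finitely
presented module of projective dimension at most `1` (the kernel of the
projection from the free module `R^n` is projective), and for every module
`M` one has `Ext¹_R(cTr(R/I), M) = 0` iff `M = IM`. -/
theorem ctr_fp_pd_le_one_and_ext_vanishes_iff_divisible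
    (R : Type u) [CommRing R] (n : ℕ) (x : Fin n → R) (I : Ideal R)
    (hI : I = Ideal.span (Set.range x))
    (hfaithful : ∀ r : R, (∀ y ∈ I, r * y = 0) → r = 0) :
    Module.FinitePresentation R
      ((Fin n → R) ⧸ LinearMap.range (LinearMap.toSpanSingleton R (Fin n → R) x)) ∧
    Module.Projective R
      ↥(LinearMap.range (LinearMap.toSpanSingleton R (Fin n → R) x)) ∧
    ∀ (M : Type u) [AddCommGroup M] [Module R M],
      ExtVanishes R
          ((Fin n → R) ⧸ LinearMap.range (LinearMap.toSpanSingleton R (Fin n → R) x)) M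
        ↔ I • (⊤ : Submodule R M) = ⊤ := by
  subst hI
  have hinj := LinearMap.toSpanSingleton_injective_of_faithful x hfaithful
  refine ⟨?_, .of_equiv (LinearEquiv.ofInjective _ hinj), fun M _ _ => ?_⟩
  · refine Module.finitePresentation_of_surjective _ (Submodule.mkQ_surjective _) ?_
    rw [Submodule.ker_mkQ, ← LinearMap.span_singleton_eq_range]
    exact Submodule.fg_span_singleton x
  · rw [Ideal.span_range_smul_top_eq_range_applyₗ, LinearMap.range_eq_top,
      ← forall_extend_range_toSpanSingleton_iff hinj]
    exact ⟨Submodule.exists_extend_of_extVanishes_quotient,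
      Submodule.extVanishes_quotient_of_forall_extend⟩
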